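/- arXiv:1708.07815 — 7 statements merged into one kernel-verified Lean document; each statement's English description precedes it below -/
import Mathlib

section
/- Let ψ ∈ V be a regular solution, i.e. N(ψ) = 0 and the linearized form DN(ψ) satisfies the inf-sup condition with constant β > 0. Then every w ∈ V satisfies the residual estimate β·‖ψ − w‖ ≤ sup_{φ∈V, ‖φ‖≤1} |N(w)(φ)| + C_b·‖ψ − w‖². -/
/-!
Since `N` is quadratic, it equals its second-order Taylor expansion at `ψ`:
`N(w) = N(ψ) - DN(ψ)(ψ - w) + B(ψ - w, ψ - w)`. With `N(ψ) = 0` this gives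
`DN(ψ)(ψ - w, φ) ≤ |N(w)(φ)| + C_b ‖ψ - w‖²` on the unit ball, and the inf-sup condition
applied to `θ = ψ - w` turns the supremum over `φ` into the claimed bound.
-/

open Set

section

variable {V : Type*} [NormedAddCommGroup V]

theorem bddAbove_range_abs_of_abs_le_mul_norm (f : V → ℝ) (K : ℝ)
    (hf : ∀ φ, |f φ| ≤ K * ‖φ‖) :
    BddAbove (range fun φ : {φ : V // ‖φ‖ ≤ 1} => |f φ|) := by
  refine ⟨|K|, ?_⟩
  rintro _ ⟨⟨φ, hφ⟩, rfl⟩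
  calc |f φ| ≤ K * ‖φ‖ := hf φ
    _ ≤ |K| * ‖φ‖ := by gcongr; exact le_abs_self K
    _ ≤ |K| * 1 := by gcongr
    _ = |K| := mul_one _

variable [Module ℝ V]

/-- `N(w)(φ)` -/
def quadraticResidual (A : V →ₗ[ℝ] V →ₗ[ℝ] ℝ) (B : V →ₗ[ℝ] V →ₗ[ℝ] V →ₗ[ℝ] ℝ)
    (L : V →ₗ[ℝ] ℝ) (w φ : V) : ℝ :=
  A w φ + B w w φ - L φ

/-- `DN(ψ)(θ, φ)` -/
def linearizedForm (A : V →ₗ[ℝ] V →ₗ[ℝ] ℝ) (B : V →ₗ[ℝ] V →ₗ[ℝ] V →ₗ[ℝ] ℝ)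
    (ψ θ φ : V) : ℝ :=
  A θ φ + 2 * B ψ θ φ

theorem abs_quadraticResidual_le (A : V →ₗ[ℝ] V →ₗ[ℝ] ℝ)
    (B : V →ₗ[ℝ] V →ₗ[ℝ] V →ₗ[ℝ] ℝ) (L : V →ₗ[ℝ] ℝ) {C_A C_b C_L : ℝ}
    (hA : ∀ x y : V, |A x y| ≤ C_A * ‖x‖ * ‖y‖)
    (hB : ∀ x y z : V, |B x y z| ≤ C_b * ‖x‖ * ‖y‖ * ‖z‖)
    (hL : ∀ x : V, |L x| ≤ C_L * ‖x‖) (w φ : V) :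
    |quadraticResidual A B L w φ| ≤ (C_A * ‖w‖ + C_b * ‖w‖ * ‖w‖ + C_L) * ‖φ‖ :=
  calc |A w φ + B w w φ - L φ| ≤ |A w φ| + |B w w φ| + |L φ| :=
        (abs_sub _ _).trans (add_le_add_left (abs_add_le _ _) _)
    _ ≤ C_A * ‖w‖ * ‖φ‖ + C_b * ‖w‖ * ‖w‖ * ‖φ‖ + C_L * ‖φ‖ :=
        add_le_add (add_le_add (hA w φ) (hB w w φ)) (hL φ)
    _ = (C_A * ‖w‖ + C_b * ‖w‖ * ‖w‖ + C_L) * ‖φ‖ := by ring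

theorem quadraticResidual_eq_taylor (A : V →ₗ[ℝ] V →ₗ[ℝ] ℝ)
    (B : V →ₗ[ℝ] V →ₗ[ℝ] V →ₗ[ℝ] ℝ) (L : V →ₗ[ℝ] ℝ)
    (hBsymm : ∀ x y z : V, B x y z = B y x z) (ψ w φ : V) :
    quadraticResidual A B L w φ = quadraticResidual A B L ψ φ
      - linearizedForm A B ψ (ψ - w) φ + B (ψ - w) (ψ - w) φ := by
  simp only [quadraticResidual, linearizedForm, map_sub, LinearMap.sub_apply]
  linarith [hBsymm w ψ φ]

theorem trilinear_diag_le_of_norm_le_one (B : V →ₗ[ℝ] V →ₗ[ℝ] V →ₗ[ℝ] ℝ) {C_b : ℝ}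
    (hCb : 0 ≤ C_b) (hB : ∀ x y z : V, |B x y z| ≤ C_b * ‖x‖ * ‖y‖ * ‖z‖)
    (θ : V) {φ : V} (hφ : ‖φ‖ ≤ 1) :
    B θ θ φ ≤ C_b * ‖θ‖ ^ 2 :=
  calc B θ θ φ ≤ C_b * ‖θ‖ * ‖θ‖ * ‖φ‖ := (le_abs_self _).trans (hB θ θ φ)
    _ ≤ C_b * ‖θ‖ * ‖θ‖ * 1 := by gcongr
    _ = C_b * ‖θ‖ ^ 2 := by ring

end

theorem residual_estimate_of_regular_solution_general
    {V : Type*} [NormedAddCommGroup V] [NormedSpace ℝ V]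
    (A : V →ₗ[ℝ] V →ₗ[ℝ] ℝ) (B : V →ₗ[ℝ] V →ₗ[ℝ] V →ₗ[ℝ] ℝ) (L : V →ₗ[ℝ] ℝ)
    (C_A C_b C_L : ℝ) (hCb : 0 < C_b)
    (hA : ∀ x y : V, |A x y| ≤ C_A * ‖x‖ * ‖y‖)
    (hBsymm : ∀ x y z : V, B x y z = B y x z)
    (hB : ∀ x y z : V, |B x y z| ≤ C_b * ‖x‖ * ‖y‖ * ‖z‖)
    (hL : ∀ x : V, |L x| ≤ C_L * ‖x‖)
    (ψ : V) (β : ℝ)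
    (hsol : ∀ φ : V, A ψ φ + B ψ ψ φ - L φ = 0)
    (hinfsup : ∀ θ : V, β * ‖θ‖ ≤
      ⨆ φ : {φ : V // ‖φ‖ ≤ 1}, (A θ (φ : V) + 2 * B ψ θ (φ : V))) :
    ∀ w : V, β * ‖ψ - w‖ ≤
      (⨆ φ : {φ : V // ‖φ‖ ≤ 1}, |A w (φ : V) + B w w (φ : V) - L (φ : V)|)
        + C_b * ‖ψ - w‖ ^ 2 := by
  intro w
  have : Nonempty {φ : V // ‖φ‖ ≤ 1} := ⟨⟨0, norm_zero.trans_le zero_le_one⟩⟩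
  have hbdd := bddAbove_range_abs_of_abs_le_mul_norm _ _
    (abs_quadraticResidual_le A B L hA hB hL w)
  calc β * ‖ψ - w‖ ≤ ⨆ φ : {φ : V // ‖φ‖ ≤ 1}, linearizedForm A B ψ (ψ - w) φ :=
        hinfsup (ψ - w)
    _ ≤ _ := ciSup_le fun ⟨φ, hφ⟩ => by
      show linearizedForm A B ψ (ψ - w) φ ≤ _
      have htaylor := quadraticResidual_eq_taylor A B L hBsymm ψ w φ
      have hres := (neg_le_abs (quadraticResidual A B L w φ)).trans (le_ciSup hbdd ⟨φ, hφ⟩)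
      have hquad := trilinear_diag_le_of_norm_le_one B hCb.le hB (ψ - w) hφ
      simp only [quadraticResidual, hsol] at htaylor hres
      linarith

/-- If `ψ` is a regular solution (`N(ψ) = 0` and `DN(ψ)` satisfies the
inf-sup condition with constant `β > 0`), then every `w ∈ V` satisfies the residual
estimate `β·‖ψ − w‖ ≤ sup_{‖φ‖≤1} |N(w)(φ)| + C_b·‖ψ − w‖²`. -/
theorem residual_estimate_of_regular_solution
    {V : Type*} [NormedAddCommGroup V] [NormedSpace ℝ V]
    (A : V →ₗ[ℝ] V →ₗ[ℝ] ℝ) (B : V →ₗ[ℝ] V →ₗ[ℝ] V →ₗ[ℝ] ℝ) (L : V →ₗ[ℝ] ℝ)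
    (C_A C_b C_L : ℝ) (hCb : 0 < C_b)
    (hA : ∀ x y : V, |A x y| ≤ C_A * ‖x‖ * ‖y‖)
    (hBsymm : ∀ x y z : V, B x y z = B y x z)
    (hB : ∀ x y z : V, |B x y z| ≤ C_b * ‖x‖ * ‖y‖ * ‖z‖)
    (hL : ∀ x : V, |L x| ≤ C_L * ‖x‖)
    (ψ : V) (β : ℝ) (hβ : 0 < β)
    (hsol : ∀ φ : V, A ψ φ + B ψ ψ φ - L φ = 0)
    (hinfsup : ∀ θ : V, β * ‖θ‖ ≤
      ⨆ φ : {φ : V // ‖φ‖ ≤ 1}, (A θ (φ : V) + 2 * B ψ θ (φ : V))) :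
    ∀ w : V, β * ‖ψ - w‖ ≤
      (⨆ φ : {φ : V // ‖φ‖ ≤ 1}, |A w (φ : V) + B w w (φ : V) - L (φ : V)|)
        + C_b * ‖ψ - w‖ ^ 2 :=
  residual_estimate_of_regular_solution_general A B L C_A C_b C_L hCb hA hBsymm hB hL ψ β hsol
    hinfsup
end

section
/- Let ψ ∈ V satisfy N(ψ) = 0 and suppose DN(ψ) satisfies the inf-sup condition with constant β > 0. If w ∈ V satisfies 2·C_b·‖ψ − w‖ ≤ β, then the reliability bound ‖ψ − w‖ ≤ (2/β)·sup_{φ∈V, ‖φ‖≤1} |N(w)(φ)| holds, i.e. the error is controlled by the dual norm of the residual. -/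
/-!
Write `e = ψ - w`. Because `N` is quadratic and `B` is symmetric, its Taylor expansion at `ψ` is
exact: `DN(ψ)(e, ·) = N(ψ) - N(w) + B(e, e, ·)`. With `N(ψ) = 0`, the inf-sup condition gives
`β‖e‖ ≤ ‖N(w)‖_* + C_b‖e‖²`, and the smallness assumption `2 C_b ‖e‖ ≤ β` absorbs the quadratic
term into the left-hand side at the cost of a factor `2`.
-/

section UnitBall

variable {V : Type*} [SeminormedAddCommGroup V]

instance : Nonempty {φ : V // ‖φ‖ ≤ 1} := ⟨⟨0, by simp⟩⟩

lemma bddAbove_range_unitBall {f : V → ℝ} {K : ℝ} (hf : ∀ φ, f φ ≤ K * ‖φ‖) :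
    BddAbove (Set.range fun φ : {φ : V // ‖φ‖ ≤ 1} => f φ) := by
  refine ⟨max K 0, ?_⟩
  rintro _ ⟨φ, rfl⟩
  calc f φ ≤ K * ‖(φ : V)‖ := hf φ
    _ ≤ max K 0 * 1 := mul_le_mul (le_max_left K 0) φ.2 (norm_nonneg _) (le_max_right K 0)
    _ = max K 0 := mul_one _

end UnitBall

section QuadraticOperator

variable {V : Type*} [NormedAddCommGroup V] [NormedSpace ℝ V]
  (A : V →ₗ[ℝ] V →ₗ[ℝ] ℝ) (B : V →ₗ[ℝ] V →ₗ[ℝ] V →ₗ[ℝ] ℝ) (L : V →ₗ[ℝ] ℝ)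

lemma linearized_sub_eq_residual_sub_residual_add (hBsymm : ∀ x y z : V, B x y z = B y x z)
    (ψ w φ : V) :
    A (ψ - w) φ + 2 * B ψ (ψ - w) φ
      = (A ψ φ + B ψ ψ φ - L φ) - (A w φ + B w w φ - L φ) + B (ψ - w) (ψ - w) φ := by
  simp only [map_sub, LinearMap.sub_apply]
  linarith [hBsymm ψ w φ]

lemma abs_residual_le {C_A C_b C_L : ℝ} (hA : ∀ x y : V, |A x y| ≤ C_A * ‖x‖ * ‖y‖)
    (hB : ∀ x y z : V, |B x y z| ≤ C_b * ‖x‖ * ‖y‖ * ‖z‖) (hL : ∀ x : V, |L x| ≤ C_L * ‖x‖)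
    (w φ : V) :
    |A w φ + B w w φ - L φ| ≤ (C_A * ‖w‖ + C_b * ‖w‖ * ‖w‖ + C_L) * ‖φ‖ := by
  calc |A w φ + B w w φ - L φ| ≤ |A w φ| + |B w w φ| + |L φ| :=
        (abs_sub _ _).trans (add_le_add (abs_add_le _ _) le_rfl)
    _ ≤ C_A * ‖w‖ * ‖φ‖ + C_b * ‖w‖ * ‖w‖ * ‖φ‖ + C_L * ‖φ‖ :=
        add_le_add (add_le_add (hA w φ) (hB w w φ)) (hL φ)
    _ = (C_A * ‖w‖ + C_b * ‖w‖ * ‖w‖ + C_L) * ‖φ‖ := by ring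

end QuadraticOperator

lemma le_two_div_mul_of_le_add_mul_sq {x β c S : ℝ} (hx : 0 ≤ x) (hβ : 0 < β)
    (h : β * x ≤ S + c * x * x) (hsmall : 2 * c * x ≤ β) : x ≤ 2 / β * S := by
  rw [div_mul_eq_mul_div, le_div_iff₀ hβ]
  nlinarith [mul_le_mul_of_nonneg_right hsmall hx]

/-- If `ψ` is a regular solution (`N(ψ) = 0`, inf-sup constant `β > 0` for
`DN(ψ)`) and `w ∈ V` satisfies `2·C_b·‖ψ − w‖ ≤ β`, then the reliability bound
`‖ψ − w‖ ≤ (2/β)·sup_{‖φ‖≤1} |N(w)(φ)|` holds. -/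
theorem reliability_bound_of_regular_solution
    {V : Type*} [NormedAddCommGroup V] [NormedSpace ℝ V]
    (A : V →ₗ[ℝ] V →ₗ[ℝ] ℝ) (B : V →ₗ[ℝ] V →ₗ[ℝ] V →ₗ[ℝ] ℝ) (L : V →ₗ[ℝ] ℝ)
    (C_A C_b C_L : ℝ) (hCb : 0 < C_b)
    (hA : ∀ x y : V, |A x y| ≤ C_A * ‖x‖ * ‖y‖)
    (hBsymm : ∀ x y z : V, B x y z = B y x z)
    (hB : ∀ x y z : V, |B x y z| ≤ C_b * ‖x‖ * ‖y‖ * ‖z‖)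
    (hL : ∀ x : V, |L x| ≤ C_L * ‖x‖)
    (ψ : V) (β : ℝ) (hβ : 0 < β)
    (hsol : ∀ φ : V, A ψ φ + B ψ ψ φ - L φ = 0)
    (hinfsup : ∀ θ : V, β * ‖θ‖ ≤
      ⨆ φ : {φ : V // ‖φ‖ ≤ 1}, (A θ (φ : V) + 2 * B ψ θ (φ : V)))
    (w : V) (hw : 2 * C_b * ‖ψ - w‖ ≤ β) :
    ‖ψ - w‖ ≤ (2 / β) *
      ⨆ φ : {φ : V // ‖φ‖ ≤ 1}, |A w (φ : V) + B w w (φ : V) - L (φ : V)| := by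
  set e := ψ - w
  have hres_bdd := bddAbove_range_unitBall (abs_residual_le A B L hA hB hL w)
  have hlin : ∀ φ : {φ : V // ‖φ‖ ≤ 1}, A e (φ : V) + 2 * B ψ e (φ : V) ≤
      (⨆ φ : {φ : V // ‖φ‖ ≤ 1}, |A w (φ : V) + B w w (φ : V) - L (φ : V)|)
        + C_b * ‖e‖ * ‖e‖ := by
    intro φ
    rw [linearized_sub_eq_residual_sub_residual_add A B L hBsymm, hsol, zero_sub]
    gcongr ?_ + ?_
    · exact (neg_le_abs _).trans (le_ciSup hres_bdd φ)
    · calc B e e φ ≤ C_b * ‖e‖ * ‖e‖ * ‖(φ : V)‖ := (le_abs_self _).trans (hB e e φ)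
        _ ≤ C_b * ‖e‖ * ‖e‖ := mul_le_of_le_one_right (by positivity) φ.2
  exact le_two_div_mul_of_le_add_mul_sq (norm_nonneg e) hβ
    ((hinfsup e).trans (ciSup_le hlin)) hw
end

section
/- Regular solutions are locally unique: if ψ ∈ V is a regular solution (N(ψ) = 0 and DN(ψ) satisfies the inf-sup condition with constant β > 0) and w ∈ V is any other solution, N(w) = 0, with C_b·‖ψ − w‖ < β, then w = ψ. -/
/-!
By the symmetry of `B`, the error `e = ψ - w` between two solutions satisfies
`DN(ψ)(e, φ) = B(e, e, φ)`. The inf-sup condition then gives `β‖e‖ ≤ C_b‖e‖²`,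
which together with `C_b‖e‖ < β` forces `e = 0`.
-/

theorem linearization_apply_sub_of_solutions {V : Type*} [AddCommGroup V] [Module ℝ V]
    (A : V →ₗ[ℝ] V →ₗ[ℝ] ℝ) (B : V →ₗ[ℝ] V →ₗ[ℝ] V →ₗ[ℝ] ℝ) (L : V →ₗ[ℝ] ℝ)
    (hBsymm : ∀ x y z : V, B x y z = B y x z) {ψ w : V}
    (hψ : ∀ φ : V, A ψ φ + B ψ ψ φ - L φ = 0) (hw : ∀ φ : V, A w φ + B w w φ - L φ = 0)
    (φ : V) :
    A (ψ - w) φ + 2 * B ψ (ψ - w) φ = B (ψ - w) (ψ - w) φ := by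
  simp only [map_sub, LinearMap.sub_apply]
  linarith [hψ φ, hw φ, hBsymm w ψ φ]

theorem iSup_closedUnitBall_le {V : Type*} [SeminormedAddCommGroup V] {f : V → ℝ} {c : ℝ}
    (hc : 0 ≤ c) (hf : ∀ φ, f φ ≤ c * ‖φ‖) :
    ⨆ φ : {φ : V // ‖φ‖ ≤ 1}, f φ ≤ c :=
  haveI : Nonempty {φ : V // ‖φ‖ ≤ 1} := ⟨⟨0, by simp⟩⟩
  ciSup_le fun φ => (hf φ).trans (mul_le_of_le_one_right hc φ.2)

theorem eq_zero_of_mul_norm_le_mul_norm_sq {V : Type*} [NormedAddCommGroup V] {e : V}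
    {β c : ℝ} (h : β * ‖e‖ ≤ c * ‖e‖ * ‖e‖) (hlt : c * ‖e‖ < β) : e = 0 := by
  refine norm_le_zero_iff.mp (nonpos_of_mul_nonpos_right ?_ (sub_pos.mpr hlt))
  linarith

theorem regular_solutions_locally_unique_general
    {V : Type*} [NormedAddCommGroup V] [NormedSpace ℝ V]
    (A : V →ₗ[ℝ] V →ₗ[ℝ] ℝ) (B : V →ₗ[ℝ] V →ₗ[ℝ] V →ₗ[ℝ] ℝ) (L : V →ₗ[ℝ] ℝ)
    (C_b : ℝ) (hCb : 0 < C_b)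
    (hBsymm : ∀ x y z : V, B x y z = B y x z)
    (hB : ∀ x y z : V, |B x y z| ≤ C_b * ‖x‖ * ‖y‖ * ‖z‖)
    (ψ : V) (β : ℝ)
    (hsol : ∀ φ : V, A ψ φ + B ψ ψ φ - L φ = 0)
    (hinfsup : ∀ θ : V, β * ‖θ‖ ≤
      ⨆ φ : {φ : V // ‖φ‖ ≤ 1}, (A θ (φ : V) + 2 * B ψ θ (φ : V)))
    (w : V) (hwsol : ∀ φ : V, A w φ + B w w φ - L φ = 0)
    (hclose : C_b * ‖ψ - w‖ < β) :
    w = ψ := by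
  have hquad : β * ‖ψ - w‖ ≤ C_b * ‖ψ - w‖ * ‖ψ - w‖ := by
    refine (hinfsup (ψ - w)).trans ?_
    simp_rw [linearization_apply_sub_of_solutions A B L hBsymm hsol hwsol]
    exact iSup_closedUnitBall_le (by positivity) fun φ => (le_abs_self _).trans (hB _ _ φ)
  exact (sub_eq_zero.mp (eq_zero_of_mul_norm_le_mul_norm_sq hquad hclose)).symm

/-- Regular solutions are locally unique: if `ψ` is a regular solution
(`N(ψ) = 0`, inf-sup constant `β > 0` for `DN(ψ)`) and `w` is any other solution
(`N(w) = 0`) with `C_b·‖ψ − w‖ < β`, then `w = ψ`. -/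
theorem regular_solutions_locally_unique
    {V : Type*} [NormedAddCommGroup V] [NormedSpace ℝ V]
    (A : V →ₗ[ℝ] V →ₗ[ℝ] ℝ) (B : V →ₗ[ℝ] V →ₗ[ℝ] V →ₗ[ℝ] ℝ) (L : V →ₗ[ℝ] ℝ)
    (C_A C_b C_L : ℝ) (hCb : 0 < C_b)
    (hA : ∀ x y : V, |A x y| ≤ C_A * ‖x‖ * ‖y‖)
    (hBsymm : ∀ x y z : V, B x y z = B y x z)
    (hB : ∀ x y z : V, |B x y z| ≤ C_b * ‖x‖ * ‖y‖ * ‖z‖)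
    (hL : ∀ x : V, |L x| ≤ C_L * ‖x‖)
    (ψ : V) (β : ℝ) (hβ : 0 < β)
    (hsol : ∀ φ : V, A ψ φ + B ψ ψ φ - L φ = 0)
    (hinfsup : ∀ θ : V, β * ‖θ‖ ≤
      ⨆ φ : {φ : V // ‖φ‖ ≤ 1}, (A θ (φ : V) + 2 * B ψ θ (φ : V)))
    (w : V) (hwsol : ∀ φ : V, A w φ + B w w φ - L φ = 0)
    (hclose : C_b * ‖ψ - w‖ < β) :
    w = ψ :=
  regular_solutions_locally_unique_general A B L C_b hCb hBsymm hB ψ β hsol hinfsup w hwsol hclose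
end

section
/- Mapping of ball to ball: let x ∈ V, suppose Ã : (θ,φ) ↦ A(θ,φ) + 2B(x,θ,φ) satisfies the inf-sup condition with constant γ > 0, set ε := sup_{φ∈V, ‖φ‖≤1} |A(x,φ) + B(x,x,φ) − L(φ)|, and assume 4·C_b·ε ≤ γ². If Θ ∈ V satisfies ‖Θ − x‖ ≤ 2ε/γ and μ(Θ) ∈ V satisfies Ã(μ(Θ),φ) = L(φ) + 2B(x,Θ,φ) − B(Θ,Θ,φ) for all φ ∈ V, then ‖μ(Θ) − x‖ ≤ 2ε/γ; that is, μ maps the closed ball of radius 2ε/γ about x into itself. -/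
/-! Write `e = μΘ - x` and `d = Θ - x`. Subtracting the defining equation of `μΘ` at `x`
and using the symmetry of `B` gives `Ã(e, φ) = -(A(x,φ) + B(x,x,φ) - L(φ)) - B(d,d,φ)`.
On the unit ball the right side is at most `ε + C_b (2ε/γ)² ≤ 2ε`, where the last step is the
smallness condition `4 C_b ε ≤ γ²`; the inf-sup condition then gives `γ ‖e‖ ≤ 2ε`. -/

section UnitBall

variable {E : Type*} [SeminormedAddCommGroup E]

lemma bddAbove_range_unitBall_of_abs_le {f : E → ℝ} (C : ℝ) (hf : ∀ φ, |f φ| ≤ C * ‖φ‖) :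
    BddAbove (Set.range fun φ : {φ : E // ‖φ‖ ≤ 1} => f φ) := by
  refine ⟨|C|, ?_⟩
  rintro _ ⟨⟨φ, hφ⟩, rfl⟩
  calc f φ ≤ |f φ| := le_abs_self _
    _ ≤ C * ‖φ‖ := hf φ
    _ ≤ |C| * ‖φ‖ := by gcongr; exact le_abs_self C
    _ ≤ |C| := mul_le_of_le_one_right (abs_nonneg C) hφ

lemma abs_le_iSup_unitBall {f : E → ℝ} (C : ℝ) (hf : ∀ φ, |f φ| ≤ C * ‖φ‖)
    {φ : E} (hφ : ‖φ‖ ≤ 1) :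
    |f φ| ≤ ⨆ ψ : {ψ : E // ‖ψ‖ ≤ 1}, |f ψ| :=
  le_ciSup (f := fun ψ : {ψ : E // ‖ψ‖ ≤ 1} => |f ψ|)
    (bddAbove_range_unitBall_of_abs_le (f := fun φ => |f φ|) C fun φ => by
      simpa only [abs_abs] using hf φ) ⟨φ, hφ⟩

lemma abs_trilinear_le_of_norm_le {B : E → E → E → ℝ} {C : ℝ} (hC : 0 ≤ C)
    (hB : ∀ x y z : E, |B x y z| ≤ C * ‖x‖ * ‖y‖ * ‖z‖)
    {d φ : E} {r : ℝ} (hd : ‖d‖ ≤ r) (hφ : ‖φ‖ ≤ 1) :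
    |B d d φ| ≤ C * r ^ 2 := by
  have hr : 0 ≤ r := (norm_nonneg d).trans hd
  calc |B d d φ| ≤ C * ‖d‖ * ‖d‖ * ‖φ‖ := hB d d φ
    _ ≤ C * r * r * 1 := by gcongr
    _ = C * r ^ 2 := by ring

end UnitBall

lemma linearized_error_eq {R M : Type*} [CommRing R] [AddCommGroup M] [Module R M]
    (A : M →ₗ[R] M →ₗ[R] R) (B : M →ₗ[R] M →ₗ[R] M →ₗ[R] R) (L : M →ₗ[R] R)
    (hBsymm : ∀ x y z : M, B x y z = B y x z) {x Θ μΘ : M}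
    (hμ : ∀ φ : M, A μΘ φ + 2 * B x μΘ φ = L φ + 2 * B x Θ φ - B Θ Θ φ) (φ : M) :
    A (μΘ - x) φ + 2 * B x (μΘ - x) φ
      = -(A x φ + B x x φ - L φ) - B (Θ - x) (Θ - x) φ := by
  simp only [map_sub, LinearMap.sub_apply]
  linear_combination hμ φ - hBsymm Θ x φ

lemma mul_sq_two_mul_div_le {C ε γ : ℝ} (hγ : 0 < γ) (hε : 0 ≤ ε)
    (hsmall : 4 * C * ε ≤ γ ^ 2) :
    C * (2 * ε / γ) ^ 2 ≤ ε := by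
  rw [div_pow, ← mul_div_assoc, div_le_iff₀ (by positivity)]
  nlinarith [mul_le_mul_of_nonneg_left hsmall hε]

/-- Mapping of ball to ball: with `Ã(θ,φ) = A(θ,φ) + 2B(x,θ,φ)` satisfying
the inf-sup condition with constant `γ > 0`, `ε = sup_{‖φ‖≤1} |A(x,φ)+B(x,x,φ)−L(φ)|`,
and `4·C_b·ε ≤ γ²`: if `‖Θ − x‖ ≤ 2ε/γ` and `μΘ` satisfies
`Ã(μΘ,φ) = L(φ) + 2B(x,Θ,φ) − B(Θ,Θ,φ)` for all `φ`, then `‖μΘ − x‖ ≤ 2ε/γ`. -/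
theorem fixed_point_map_ball_to_ball
    {V : Type*} [NormedAddCommGroup V] [NormedSpace ℝ V]
    (A : V →ₗ[ℝ] V →ₗ[ℝ] ℝ) (B : V →ₗ[ℝ] V →ₗ[ℝ] V →ₗ[ℝ] ℝ) (L : V →ₗ[ℝ] ℝ)
    (C_A C_b C_L : ℝ) (hCb : 0 < C_b)
    (hA : ∀ x y : V, |A x y| ≤ C_A * ‖x‖ * ‖y‖)
    (hBsymm : ∀ x y z : V, B x y z = B y x z)
    (hB : ∀ x y z : V, |B x y z| ≤ C_b * ‖x‖ * ‖y‖ * ‖z‖)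
    (hL : ∀ x : V, |L x| ≤ C_L * ‖x‖)
    (x : V) (γ : ℝ) (hγ : 0 < γ)
    (hinfsup : ∀ θ : V, γ * ‖θ‖ ≤
      ⨆ φ : {φ : V // ‖φ‖ ≤ 1}, (A θ (φ : V) + 2 * B x θ (φ : V)))
    (ε : ℝ)
    (hε : ε = ⨆ φ : {φ : V // ‖φ‖ ≤ 1},
      |A x (φ : V) + B x x (φ : V) - L (φ : V)|)
    (hsmall : 4 * C_b * ε ≤ γ ^ 2)
    (Θ : V) (hΘ : ‖Θ - x‖ ≤ 2 * ε / γ)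
    (μΘ : V)
    (hμ : ∀ φ : V, A μΘ φ + 2 * B x μΘ φ = L φ + 2 * B x Θ φ - B Θ Θ φ) :
    ‖μΘ - x‖ ≤ 2 * ε / γ := by
  have hε_nonneg : 0 ≤ ε := by
    have := mul_nonneg ((norm_nonneg _).trans hΘ) hγ.le
    rw [div_mul_cancel₀ _ hγ.ne'] at this
    linarith
  have hresidual_bound : ∀ φ : V, |A x φ + B x x φ - L φ| ≤
      (C_A * ‖x‖ + C_b * ‖x‖ * ‖x‖ + C_L) * ‖φ‖ := fun φ => by
    have := abs_sub (A x φ + B x x φ) (L φ)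
    have := abs_add_le (A x φ) (B x x φ)
    linarith [hA x φ, hB x x φ, hL φ]
  have herror : ∀ φ : {φ : V // ‖φ‖ ≤ 1},
      A (μΘ - x) φ + 2 * B x (μΘ - x) φ ≤ ε + C_b * (2 * ε / γ) ^ 2 := by
    rintro ⟨φ, hφ⟩
    rw [linearized_error_eq A B L hBsymm hμ]
    have hres := hε ▸ abs_le_iSup_unitBall _ hresidual_bound hφ
    have hquad := abs_trilinear_le_of_norm_le hCb.le hB hΘ hφ
    linarith [neg_abs_le (A x φ + B x x φ - L φ), neg_abs_le (B (Θ - x) (Θ - x) φ)]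
  have : Nonempty {φ : V // ‖φ‖ ≤ 1} := ⟨⟨0, norm_zero.trans_le zero_le_one⟩⟩
  rw [le_div_iff₀ hγ, mul_comm]
  linarith [(hinfsup _).trans (ciSup_le herror), mul_sq_two_mul_div_le hγ hε_nonneg hsmall]
end

section
/- Contraction estimate for the fixed-point map: let x ∈ V and suppose Ã : (θ,φ) ↦ A(θ,φ) + 2B(x,θ,φ) satisfies the inf-sup condition with constant γ > 0. If Θ, Θ̃ ∈ V and μ(Θ), μ(Θ̃) ∈ V satisfy Ã(μ(Θ),φ) = L(φ) + 2B(x,Θ,φ) − B(Θ,Θ,φ) and Ã(μ(Θ̃),φ) = L(φ) + 2B(x,Θ̃,φ) − B(Θ̃,Θ̃,φ) for all φ ∈ V, then γ·‖μ(Θ) − μ(Θ̃)‖ ≤ C_b·(‖Θ − x‖ + ‖Θ̃ − x‖)·‖Θ − Θ̃‖. -/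
/-! Subtracting the two equations, `μΘ - μΘ'` solves `Ã(μΘ - μΘ', φ) = -B(Θ + Θ' - 2x, Θ - Θ', φ)`,
because symmetry of `B` in its first two arguments turns `B(Θ,Θ) - B(Θ',Θ')` into
`B(Θ + Θ', Θ - Θ')`. The right-hand side is at most `C_b (‖Θ - x‖ + ‖Θ' - x‖) ‖Θ - Θ'‖` on the
unit ball, and the inf-sup condition converts this bound into one on `γ ‖μΘ - μΘ'‖`. -/

def SatisfiesInfSup {V : Type*} [NormedAddCommGroup V] (a : V → V → ℝ) (γ : ℝ) : Prop :=
  ∀ θ : V, γ * ‖θ‖ ≤ ⨆ φ : {φ : V // ‖φ‖ ≤ 1}, a θ φ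

theorem SatisfiesInfSup.mul_norm_le {V : Type*} [NormedAddCommGroup V] {a : V → V → ℝ} {γ : ℝ}
    (h : SatisfiesInfSup a γ) {θ : V} {M : ℝ} (hM : ∀ φ : V, ‖φ‖ ≤ 1 → a θ φ ≤ M) :
    γ * ‖θ‖ ≤ M :=
  have : Nonempty {φ : V // ‖φ‖ ≤ 1} := ⟨⟨0, by simp⟩⟩
  (h θ).trans (ciSup_le fun φ => hM φ φ.2)

theorem LinearMap.apply_self_sub_apply_self_of_symm {R M N : Type*} [CommRing R]
    [AddCommGroup M] [Module R M] [AddCommGroup N] [Module R N] (b : M →ₗ[R] M →ₗ[R] N)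
    (hb : ∀ u v : M, b u v = b v u) (x u v : M) :
    b u u - b v v - (2 : R) • b x (u - v) = b ((u - x) + (v - x)) (u - v) := by
  simp only [map_sub, map_add, LinearMap.sub_apply, LinearMap.add_apply, hb v u, two_smul]
  abel

theorem neg_trilinear_le_of_norm_le_one {V : Type*} [NormedAddCommGroup V]
    (B : V → V → V → ℝ) {C : ℝ} (hC : 0 ≤ C)
    (hB : ∀ u v w : V, |B u v w| ≤ C * ‖u‖ * ‖v‖ * ‖w‖) (u v : V) {φ : V} (hφ : ‖φ‖ ≤ 1) :
    -B u v φ ≤ C * ‖u‖ * ‖v‖ :=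
  calc -B u v φ ≤ |B u v φ| := neg_le_abs _
    _ ≤ C * ‖u‖ * ‖v‖ * ‖φ‖ := hB u v φ
    _ ≤ C * ‖u‖ * ‖v‖ := mul_le_of_le_one_right (by positivity) hφ

theorem fixed_point_map_contraction_estimate_general
    {V : Type*} [NormedAddCommGroup V] [NormedSpace ℝ V]
    (A : V →ₗ[ℝ] V →ₗ[ℝ] ℝ) (B : V →ₗ[ℝ] V →ₗ[ℝ] V →ₗ[ℝ] ℝ) (L : V →ₗ[ℝ] ℝ)
    (C_b : ℝ) (hCb : 0 < C_b)
    (hBsymm : ∀ x y z : V, B x y z = B y x z)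
    (hB : ∀ x y z : V, |B x y z| ≤ C_b * ‖x‖ * ‖y‖ * ‖z‖)
    (x : V) (γ : ℝ)
    (hinfsup : ∀ θ : V, γ * ‖θ‖ ≤
      ⨆ φ : {φ : V // ‖φ‖ ≤ 1}, (A θ (φ : V) + 2 * B x θ (φ : V)))
    (Θ Θ' μΘ μΘ' : V)
    (hμ : ∀ φ : V, A μΘ φ + 2 * B x μΘ φ = L φ + 2 * B x Θ φ - B Θ Θ φ)
    (hμ' : ∀ φ : V, A μΘ' φ + 2 * B x μΘ' φ = L φ + 2 * B x Θ' φ - B Θ' Θ' φ) :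
    γ * ‖μΘ - μΘ'‖ ≤ C_b * (‖Θ - x‖ + ‖Θ' - x‖) * ‖Θ - Θ'‖ := by
  have hdiff : ∀ φ : V, A (μΘ - μΘ') φ + 2 * B x (μΘ - μΘ') φ =
      -B ((Θ - x) + (Θ' - x)) (Θ - Θ') φ := by
    intro φ
    have hsq := congr($(B.apply_self_sub_apply_self_of_symm
      (fun u v => LinearMap.ext (hBsymm u v)) x Θ Θ') φ)
    simp only [map_sub, LinearMap.sub_apply, LinearMap.smul_apply, smul_eq_mul] at hsq ⊢
    linarith [hμ φ, hμ' φ]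
  refine SatisfiesInfSup.mul_norm_le (a := fun θ φ => A θ φ + 2 * B x θ φ) hinfsup
    fun φ hφ => ?_
  calc A (μΘ - μΘ') φ + 2 * B x (μΘ - μΘ') φ = -B ((Θ - x) + (Θ' - x)) (Θ - Θ') φ := hdiff φ
    _ ≤ C_b * ‖(Θ - x) + (Θ' - x)‖ * ‖Θ - Θ'‖ :=
      neg_trilinear_le_of_norm_le_one (fun u v w => B u v w) hCb.le hB _ _ hφ
    _ ≤ C_b * (‖Θ - x‖ + ‖Θ' - x‖) * ‖Θ - Θ'‖ := by gcongr; exact norm_add_le _ _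

/-- Contraction estimate for the fixed-point map: with
`Ã(θ,φ) = A(θ,φ) + 2B(x,θ,φ)` satisfying the inf-sup condition with constant `γ > 0`,
if `μΘ` and `μΘ'` solve the fixed-point equations for `Θ` and `Θ̃` respectively, then
`γ·‖μ(Θ) − μ(Θ̃)‖ ≤ C_b·(‖Θ − x‖ + ‖Θ̃ − x‖)·‖Θ − Θ̃‖`. -/
theorem fixed_point_map_contraction_estimate
    {V : Type*} [NormedAddCommGroup V] [NormedSpace ℝ V]
    (A : V →ₗ[ℝ] V →ₗ[ℝ] ℝ) (B : V →ₗ[ℝ] V →ₗ[ℝ] V →ₗ[ℝ] ℝ) (L : V →ₗ[ℝ] ℝ)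
    (C_A C_b C_L : ℝ) (hCb : 0 < C_b)
    (hA : ∀ x y : V, |A x y| ≤ C_A * ‖x‖ * ‖y‖)
    (hBsymm : ∀ x y z : V, B x y z = B y x z)
    (hB : ∀ x y z : V, |B x y z| ≤ C_b * ‖x‖ * ‖y‖ * ‖z‖)
    (hL : ∀ x : V, |L x| ≤ C_L * ‖x‖)
    (x : V) (γ : ℝ) (hγ : 0 < γ)
    (hinfsup : ∀ θ : V, γ * ‖θ‖ ≤
      ⨆ φ : {φ : V // ‖φ‖ ≤ 1}, (A θ (φ : V) + 2 * B x θ (φ : V)))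
    (Θ Θ' μΘ μΘ' : V)
    (hμ : ∀ φ : V, A μΘ φ + 2 * B x μΘ φ = L φ + 2 * B x Θ φ - B Θ Θ φ)
    (hμ' : ∀ φ : V, A μΘ' φ + 2 * B x μΘ' φ = L φ + 2 * B x Θ' φ - B Θ' Θ' φ) :
    γ * ‖μΘ - μΘ'‖ ≤ C_b * (‖Θ - x‖ + ‖Θ' - x‖) * ‖Θ - Θ'‖ :=
  fixed_point_map_contraction_estimate_general A B L C_b hCb hBsymm hB x γ hinfsup Θ Θ' μΘ μΘ' hμ
    hμ'
end

section
/- Existence and local uniqueness of a solution near an approximate solution: let V be a finite-dimensional real normed vector space, let x ∈ V, suppose Ã : (θ,φ) ↦ A(θ,φ) + 2B(x,θ,φ) satisfies the inf-sup condition with constant γ > 0, set ε := sup_{φ∈V, ‖φ‖≤1} |A(x,φ) + B(x,x,φ) − L(φ)|, and assume 4·C_b·ε < γ². Then there exists exactly one w ∈ V with ‖w − x‖ ≤ 2ε/γ satisfying A(w,φ) + B(w,w,φ) = L(φ) for all φ ∈ V. -/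
/-!
Writing `w = x + e`, the equation becomes `Ã e = -(R + B(e, e))`, where `R` is the residual of
`x`. The inf-sup condition makes `Ã` injective, hence invertible since `V` is finite-dimensional,
so the solutions are the fixed points of `e ↦ Ã⁻¹(-R - B(e, e))`. On the closed ball of radius
`ρ = 2ε/γ` this map sends the ball into itself (`ε + C_b ρ² ≤ γ ρ`) and is a contraction with
constant `2 C_b ρ / γ < 1`, both because `4 C_b ε < γ²`; Banach's fixed point theorem concludes.
-/

open Function Set Metric NNReal

theorem existsUnique_isFixedPt_of_lipschitzOnWith {α : Type*} [MetricSpace α] {f : α → α}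
    {s : Set α} {K : ℝ≥0} (hsc : IsComplete s) (hs : s.Nonempty) (hsf : MapsTo f s s)
    (hK : K < 1) (hf : LipschitzOnWith K f s) : ∃! x, x ∈ s ∧ IsFixedPt f x := by
  have : CompleteSpace s := hsc.completeSpace_coe
  have : Nonempty s := hs.to_subtype
  have hcontr : ContractingWith K (hsf.restrict f s s) :=
    ⟨hK, LipschitzWith.of_dist_le_mul fun x y => hf.dist_le_mul x x.2 y y.2⟩
  refine ⟨_, ⟨(ContractingWith.fixedPoint _ hcontr).2,
    congrArg Subtype.val (ContractingWith.fixedPoint_isFixedPt hcontr)⟩, ?_⟩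
  rintro y ⟨hy, hfy⟩
  exact congrArg Subtype.val (hcontr.fixedPoint_unique (x := ⟨y, hy⟩) (Subtype.ext hfy))

section Radius

variable {γ ε C : ℝ}

theorem add_mul_sq_le_mul_of_four_mul_le_sq (hγ : 0 < γ) (hε : 0 ≤ ε)
    (hsmall : 4 * C * ε ≤ γ ^ 2) : ε + C * (2 * ε / γ) ^ 2 ≤ γ * (2 * ε / γ) := by
  have hCε : C * (2 * ε / γ) ^ 2 * γ ^ 2 ≤ ε * γ ^ 2 := by
    calc C * (2 * ε / γ) ^ 2 * γ ^ 2 = 4 * C * ε * ε := by field_simp; ring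
      _ ≤ γ ^ 2 * ε := mul_le_mul_of_nonneg_right hsmall hε
      _ = ε * γ ^ 2 := mul_comm _ _
  have := le_of_mul_le_mul_right hCε (by positivity)
  rw [mul_div_cancel₀ _ hγ.ne']
  linarith

theorem two_mul_mul_div_lt_one_of_four_mul_lt_sq (hγ : 0 < γ) (hsmall : 4 * C * ε < γ ^ 2) :
    2 * C * (2 * ε / γ) / γ < 1 := by
  rw [div_lt_one hγ, show 2 * C * (2 * ε / γ) = 4 * C * ε / γ by ring, div_lt_iff₀ hγ]
  nlinarith

end Radius

section

variable {V : Type*} [NormedAddCommGroup V] [NormedSpace ℝ V]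

theorem bddAbove_range_abs_unitBall [FiniteDimensional ℝ V] (f : Module.Dual ℝ V) :
    BddAbove (range fun φ : {φ : V // ‖φ‖ ≤ 1} => |f φ|) := by
  refine ⟨‖LinearMap.toContinuousLinearMap f‖, ?_⟩
  rintro _ ⟨φ, rfl⟩
  calc |f φ| = ‖LinearMap.toContinuousLinearMap f φ‖ := (Real.norm_eq_abs _).symm
    _ ≤ ‖LinearMap.toContinuousLinearMap f‖ * ‖(φ : V)‖ := ContinuousLinearMap.le_opNorm _ _
    _ ≤ ‖LinearMap.toContinuousLinearMap f‖ := mul_le_of_le_one_right (norm_nonneg _) φ.2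

def InfSup (a : V →ₗ[ℝ] V →ₗ[ℝ] ℝ) (γ : ℝ) : Prop :=
  ∀ θ : V, γ * ‖θ‖ ≤ ⨆ φ : {φ : V // ‖φ‖ ≤ 1}, a θ φ

namespace InfSup

variable {a : V →ₗ[ℝ] V →ₗ[ℝ] ℝ} {γ : ℝ}

theorem mul_norm_le (ha : InfSup a γ) (θ : V) {M : ℝ} (hM : ∀ φ : V, ‖φ‖ ≤ 1 → a θ φ ≤ M) :
    γ * ‖θ‖ ≤ M :=
  have : Nonempty {φ : V // ‖φ‖ ≤ 1} := ⟨⟨0, by simp⟩⟩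
  (ha θ).trans (ciSup_le fun φ => hM φ φ.2)

theorem injective (ha : InfSup a γ) (hγ : 0 < γ) : Injective a := by
  rw [← LinearMap.ker_eq_bot, LinearMap.ker_eq_bot']
  intro θ hθ
  have : γ * ‖θ‖ ≤ 0 := ha.mul_norm_le θ fun φ _ => by simp [hθ]
  exact norm_le_zero_iff.mp (nonpos_of_mul_nonpos_right this hγ)

noncomputable def toDualEquiv [FiniteDimensional ℝ V] (ha : InfSup a γ) (hγ : 0 < γ) :
    V ≃ₗ[ℝ] Module.Dual ℝ V :=
  LinearEquiv.ofInjectiveOfFinrankEq a (ha.injective hγ) Subspace.dual_finrank_eq.symm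

@[simp]
theorem toDualEquiv_apply [FiniteDimensional ℝ V] (ha : InfSup a γ) (hγ : 0 < γ) (θ : V) :
    ha.toDualEquiv hγ θ = a θ :=
  rfl

end InfSup

section QuadraticPerturbation

variable {a : V →ₗ[ℝ] V →ₗ[ℝ] ℝ} {b : V →ₗ[ℝ] V →ₗ[ℝ] V →ₗ[ℝ] ℝ} {r : Module.Dual ℝ V}
  {γ ε C : ℝ}

theorem abs_apply_le_of_norm_le_one (hb : ∀ u v φ : V, |b u v φ| ≤ C * ‖u‖ * ‖v‖ * ‖φ‖)
    (hC : 0 ≤ C) (u v : V) {φ : V} (hφ : ‖φ‖ ≤ 1) : |b u v φ| ≤ C * ‖u‖ * ‖v‖ :=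
  (hb u v φ).trans (mul_le_of_le_one_right (by positivity) hφ)

theorem InfSup.mul_norm_le_of_eq_neg (ha : InfSup a γ)
    (hb : ∀ u v φ : V, |b u v φ| ≤ C * ‖u‖ * ‖v‖ * ‖φ‖) (hC : 0 ≤ C)
    (hr : ∀ φ : V, ‖φ‖ ≤ 1 → |r φ| ≤ ε) {θ e : V} (hθ : a θ = -(r + b e e)) :
    γ * ‖θ‖ ≤ ε + C * ‖e‖ ^ 2 := by
  refine ha.mul_norm_le θ fun φ hφ => ?_
  have hrφ := abs_le.mp (hr φ hφ)
  have hbφ := abs_le.mp (abs_apply_le_of_norm_le_one hb hC e e hφ)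
  rw [hθ]
  simp only [LinearMap.neg_apply, LinearMap.add_apply]
  nlinarith

theorem InfSup.mul_norm_sub_le_of_eq_neg (ha : InfSup a γ)
    (hb : ∀ u v φ : V, |b u v φ| ≤ C * ‖u‖ * ‖v‖ * ‖φ‖) (hC : 0 ≤ C) {θ θ' e e' : V}
    (hθ : a θ = -(r + b e e)) (hθ' : a θ' = -(r + b e' e')) :
    γ * ‖θ - θ'‖ ≤ C * (‖e‖ + ‖e'‖) * ‖e - e'‖ := by
  refine ha.mul_norm_le _ fun φ hφ => ?_
  have hdiff : a (θ - θ') φ = -(b (e - e') e φ + b e' (e - e') φ) := by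
    simp only [map_sub, hθ, hθ', LinearMap.sub_apply, LinearMap.neg_apply, LinearMap.add_apply]
    ring
  have h₁ := abs_le.mp (abs_apply_le_of_norm_le_one hb hC (e - e') e hφ)
  have h₂ := abs_le.mp (abs_apply_le_of_norm_le_one hb hC e' (e - e') hφ)
  rw [hdiff]
  nlinarith

theorem existsUnique_norm_le_and_add_quadratic_eq_zero [FiniteDimensional ℝ V]
    (ha : InfSup a γ) (hγ : 0 < γ)
    (hb : ∀ u v φ : V, |b u v φ| ≤ C * ‖u‖ * ‖v‖ * ‖φ‖) (hC : 0 ≤ C)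
    (hr : ∀ φ : V, ‖φ‖ ≤ 1 → |r φ| ≤ ε) (hsmall : 4 * C * ε < γ ^ 2) :
    ∃! e : V, ‖e‖ ≤ 2 * ε / γ ∧ a e + b e e + r = 0 := by
  set T := ha.toDualEquiv hγ
  set Φ : V → V := fun e => T.symm (-(r + b e e))
  have hΦ (e : V) : a (Φ e) = -(r + b e e) := T.apply_symm_apply _
  have isFixedPt_iff (e : V) : IsFixedPt Φ e ↔ a e + b e e + r = 0 := by
    rw [IsFixedPt, T.symm_apply_eq, ha.toDualEquiv_apply, eq_comm, eq_neg_iff_add_eq_zero,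
      add_comm r, ← add_assoc]
  set ρ := 2 * ε / γ
  have hε : 0 ≤ ε := (abs_nonneg _).trans (hr 0 (by simp))
  have hρ : 0 ≤ ρ := by positivity
  have hmaps : MapsTo Φ (closedBall 0 ρ) (closedBall 0 ρ) := by
    intro e he
    rw [mem_closedBall_zero_iff] at he ⊢
    refine le_of_mul_le_mul_left ?_ hγ
    calc γ * ‖Φ e‖ ≤ ε + C * ‖e‖ ^ 2 := ha.mul_norm_le_of_eq_neg hb hC hr (hΦ e)
      _ ≤ ε + C * ρ ^ 2 := by gcongr
      _ ≤ γ * ρ := add_mul_sq_le_mul_of_four_mul_le_sq hγ hε hsmall.le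
  have hlip : LipschitzOnWith (2 * C * ρ / γ).toNNReal Φ (closedBall 0 ρ) := by
    refine LipschitzOnWith.of_dist_le_mul fun e he e' he' => ?_
    rw [mem_closedBall_zero_iff] at he he'
    rw [Real.coe_toNNReal _ (by positivity), dist_eq_norm, dist_eq_norm, div_mul_eq_mul_div,
      le_div_iff₀' hγ]
    calc γ * ‖Φ e - Φ e'‖ ≤ C * (‖e‖ + ‖e'‖) * ‖e - e'‖ :=
          ha.mul_norm_sub_le_of_eq_neg hb hC (hΦ e) (hΦ e')
      _ ≤ C * (ρ + ρ) * ‖e - e'‖ := by gcongr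
      _ = 2 * C * ρ * ‖e - e'‖ := by ring
  have hK : (2 * C * ρ / γ).toNNReal < 1 := by
    simpa using two_mul_mul_div_lt_one_of_four_mul_lt_sq hγ hsmall
  have := existsUnique_isFixedPt_of_lipschitzOnWith isClosed_closedBall.isComplete
    (nonempty_closedBall.mpr hρ) hmaps hK hlip
  simpa only [mem_closedBall_zero_iff, isFixedPt_iff] using this

end QuadraticPerturbation

theorem linearization_add_quadratic_add_residual (A : V →ₗ[ℝ] V →ₗ[ℝ] ℝ)
    {B : V →ₗ[ℝ] V →ₗ[ℝ] V →ₗ[ℝ] ℝ} (L : V →ₗ[ℝ] ℝ) (hBsymm : ∀ x y z : V, B x y z = B y x z)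
    (x w : V) :
    (A + (2 : ℝ) • B x) (w - x) + B (w - x) (w - x) + (A x + B x x - L) = A w + B w w - L := by
  ext φ
  simp only [map_sub, LinearMap.add_apply, LinearMap.sub_apply, LinearMap.smul_apply,
    smul_eq_mul]
  linear_combination hBsymm x w φ

end

theorem exists_unique_solution_near_approximate_general
    {V : Type*} [NormedAddCommGroup V] [NormedSpace ℝ V] [FiniteDimensional ℝ V]
    (A : V →ₗ[ℝ] V →ₗ[ℝ] ℝ) (B : V →ₗ[ℝ] V →ₗ[ℝ] V →ₗ[ℝ] ℝ) (L : V →ₗ[ℝ] ℝ)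
    (C_b : ℝ) (hCb : 0 < C_b)
    (hBsymm : ∀ x y z : V, B x y z = B y x z)
    (hB : ∀ x y z : V, |B x y z| ≤ C_b * ‖x‖ * ‖y‖ * ‖z‖)
    (x : V) (γ : ℝ) (hγ : 0 < γ)
    (hinfsup : ∀ θ : V, γ * ‖θ‖ ≤
      ⨆ φ : {φ : V // ‖φ‖ ≤ 1}, (A θ (φ : V) + 2 * B x θ (φ : V)))
    (ε : ℝ)
    (hε : ε = ⨆ φ : {φ : V // ‖φ‖ ≤ 1},
      |A x (φ : V) + B x x (φ : V) - L (φ : V)|)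
    (hsmall : 4 * C_b * ε < γ ^ 2) :
    ∃! w : V, ‖w - x‖ ≤ 2 * ε / γ ∧ ∀ φ : V, A w φ + B w w φ = L φ := by
  have ha : InfSup (A + (2 : ℝ) • B x) γ := hinfsup
  have hr (φ : V) (hφ : ‖φ‖ ≤ 1) : |(A x + B x x - L) φ| ≤ ε :=
    hε ▸ le_ciSup (bddAbove_range_abs_unitBall (A x + B x x - L)) ⟨φ, hφ⟩
  refine ((Equiv.subRight x).existsUnique_congr fun w => ?_).mpr
    (existsUnique_norm_le_and_add_quadratic_eq_zero ha hγ hB hCb.le hr hsmall)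
  rw [Equiv.subRight_apply, linearization_add_quadratic_add_residual A L hBsymm, sub_eq_zero,
    LinearMap.ext_iff]
  rfl

/-- Existence and local uniqueness of a solution near an approximate
solution: on a finite-dimensional `V`, with `Ã(θ,φ) = A(θ,φ) + 2B(x,θ,φ)` satisfying
the inf-sup condition with constant `γ > 0`,
`ε = sup_{‖φ‖≤1} |A(x,φ)+B(x,x,φ)−L(φ)|` and `4·C_b·ε < γ²`, there is exactly one
`w ∈ V` with `‖w − x‖ ≤ 2ε/γ` such that `A(w,φ) + B(w,w,φ) = L(φ)` for all `φ`. -/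
theorem exists_unique_solution_near_approximate
    {V : Type*} [NormedAddCommGroup V] [NormedSpace ℝ V] [FiniteDimensional ℝ V]
    (A : V →ₗ[ℝ] V →ₗ[ℝ] ℝ) (B : V →ₗ[ℝ] V →ₗ[ℝ] V →ₗ[ℝ] ℝ) (L : V →ₗ[ℝ] ℝ)
    (C_A C_b C_L : ℝ) (hCb : 0 < C_b)
    (hA : ∀ x y : V, |A x y| ≤ C_A * ‖x‖ * ‖y‖)
    (hBsymm : ∀ x y z : V, B x y z = B y x z)
    (hB : ∀ x y z : V, |B x y z| ≤ C_b * ‖x‖ * ‖y‖ * ‖z‖)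
    (hL : ∀ x : V, |L x| ≤ C_L * ‖x‖)
    (x : V) (γ : ℝ) (hγ : 0 < γ)
    (hinfsup : ∀ θ : V, γ * ‖θ‖ ≤
      ⨆ φ : {φ : V // ‖φ‖ ≤ 1}, (A θ (φ : V) + 2 * B x θ (φ : V)))
    (ε : ℝ)
    (hε : ε = ⨆ φ : {φ : V // ‖φ‖ ≤ 1},
      |A x (φ : V) + B x x (φ : V) - L (φ : V)|)
    (hsmall : 4 * C_b * ε < γ ^ 2) :
    ∃! w : V, ‖w - x‖ ≤ 2 * ε / γ ∧ ∀ φ : V, A w φ + B w w φ = L φ :=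
  exists_unique_solution_near_approximate_general A B L C_b hCb hBsymm hB x γ hγ hinfsup ε hε hsmall
end

section
/- Quadratic error reduction of one Newton step: let w ∈ V satisfy A(w,φ) + B(w,w,φ) = L(φ) for all φ ∈ V, let z ∈ V be such that the bilinear form (θ,φ) ↦ A(θ,φ) + 2B(z,θ,φ) satisfies the inf-sup condition with constant γ' > 0, and let w⁺ ∈ V satisfy the Newton equation A(w⁺,φ) + 2B(z,w⁺,φ) = B(z,z,φ) + L(φ) for all φ ∈ V. Then γ'·‖w − w⁺‖ ≤ C_b·‖w − z‖². -/
/-!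
Subtracting the Newton equation from the equation for `w` and using the symmetry of `B`, the
error `e = w - w⁺` satisfies `A(e,φ) + 2B(z,e,φ) = -B(w-z,w-z,φ)`: the residual of the
linearization at `z` is exactly the quadratic remainder. The inf-sup condition bounds `γ'‖e‖`
by the dual norm of the right-hand side, which the trilinear bound controls by `C_b‖w-z‖²`.
-/

theorem LinearMap.newton_error_eq {R V : Type*} [CommRing R] [AddCommGroup V] [Module R V]
    (A : V →ₗ[R] V →ₗ[R] R) (B : V →ₗ[R] V →ₗ[R] V →ₗ[R] R) (L : V →ₗ[R] R)
    (hBsymm : ∀ x y φ : V, B x y φ = B y x φ) {w z wplus : V}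
    (hw : ∀ φ : V, A w φ + B w w φ = L φ)
    (hnewton : ∀ φ : V, A wplus φ + 2 * B z wplus φ = B z z φ + L φ) (φ : V) :
    A (w - wplus) φ + 2 * B z (w - wplus) φ = -B (w - z) (w - z) φ := by
  have hzw := hBsymm w z φ
  simp only [map_sub, LinearMap.sub_apply]
  linear_combination hw φ - hnewton φ - hzw

theorem iSup_unitBall_le_of_abs_le {V : Type*} [SeminormedAddCommGroup V] {f : V → ℝ} {c : ℝ}
    (hc : 0 ≤ c) (hf : ∀ φ : V, |f φ| ≤ c * ‖φ‖) :
    ⨆ φ : {φ : V // ‖φ‖ ≤ 1}, f φ ≤ c :=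
  Real.iSup_le (fun ⟨φ, hφ⟩ => calc
    f φ ≤ |f φ| := le_abs_self _
    _ ≤ c * ‖φ‖ := hf φ
    _ ≤ c := mul_le_of_le_one_right hc hφ) hc

theorem newton_step_quadratic_error_reduction_general
    {V : Type*} [NormedAddCommGroup V] [NormedSpace ℝ V]
    (A : V →ₗ[ℝ] V →ₗ[ℝ] ℝ) (B : V →ₗ[ℝ] V →ₗ[ℝ] V →ₗ[ℝ] ℝ) (L : V →ₗ[ℝ] ℝ)
    (C_b : ℝ) (hCb : 0 < C_b)
    (hBsymm : ∀ x y z : V, B x y z = B y x z)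
    (hB : ∀ x y z : V, |B x y z| ≤ C_b * ‖x‖ * ‖y‖ * ‖z‖)
    (w : V) (hw : ∀ φ : V, A w φ + B w w φ = L φ)
    (z : V) (γ' : ℝ)
    (hinfsup : ∀ θ : V, γ' * ‖θ‖ ≤
      ⨆ φ : {φ : V // ‖φ‖ ≤ 1}, (A θ (φ : V) + 2 * B z θ (φ : V)))
    (wplus : V)
    (hnewton : ∀ φ : V, A wplus φ + 2 * B z wplus φ = B z z φ + L φ) :
    γ' * ‖w - wplus‖ ≤ C_b * ‖w - z‖ ^ 2 := by
  have hremainder : ∀ φ : V, |-B (w - z) (w - z) φ| ≤ C_b * ‖w - z‖ ^ 2 * ‖φ‖ := fun φ => by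
    rw [abs_neg, sq, ← mul_assoc]
    exact hB _ _ φ
  calc γ' * ‖w - wplus‖
      ≤ ⨆ φ : {φ : V // ‖φ‖ ≤ 1}, (A (w - wplus) φ + 2 * B z (w - wplus) φ) := hinfsup _
    _ = ⨆ φ : {φ : V // ‖φ‖ ≤ 1}, -B (w - z) (w - z) φ := by
        simp only [LinearMap.newton_error_eq A B L hBsymm hw hnewton]
    _ ≤ C_b * ‖w - z‖ ^ 2 := iSup_unitBall_le_of_abs_le (by positivity) hremainder

/-- Quadratic error reduction of one Newton step: if `w` solves
`A(w,φ) + B(w,w,φ) = L(φ)` for all `φ`, the form `(θ,φ) ↦ A(θ,φ) + 2B(z,θ,φ)`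
satisfies the inf-sup condition with constant `γ' > 0`, and `w⁺` solves the Newton
equation `A(w⁺,φ) + 2B(z,w⁺,φ) = B(z,z,φ) + L(φ)` for all `φ`, then
`γ'·‖w − w⁺‖ ≤ C_b·‖w − z‖²`. -/
theorem newton_step_quadratic_error_reduction
    {V : Type*} [NormedAddCommGroup V] [NormedSpace ℝ V]
    (A : V →ₗ[ℝ] V →ₗ[ℝ] ℝ) (B : V →ₗ[ℝ] V →ₗ[ℝ] V →ₗ[ℝ] ℝ) (L : V →ₗ[ℝ] ℝ)
    (C_A C_b C_L : ℝ) (hCb : 0 < C_b)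
    (hA : ∀ x y : V, |A x y| ≤ C_A * ‖x‖ * ‖y‖)
    (hBsymm : ∀ x y z : V, B x y z = B y x z)
    (hB : ∀ x y z : V, |B x y z| ≤ C_b * ‖x‖ * ‖y‖ * ‖z‖)
    (hL : ∀ x : V, |L x| ≤ C_L * ‖x‖)
    (w : V) (hw : ∀ φ : V, A w φ + B w w φ = L φ)
    (z : V) (γ' : ℝ) (hγ' : 0 < γ')
    (hinfsup : ∀ θ : V, γ' * ‖θ‖ ≤
      ⨆ φ : {φ : V // ‖φ‖ ≤ 1}, (A θ (φ : V) + 2 * B z θ (φ : V)))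
    (wplus : V)
    (hnewton : ∀ φ : V, A wplus φ + 2 * B z wplus φ = B z z φ + L φ) :
    γ' * ‖w - wplus‖ ≤ C_b * ‖w - z‖ ^ 2 :=
  newton_step_quadratic_error_reduction_general A B L C_b hCb hBsymm hB w hw z γ' hinfsup wplus
    hnewton
end
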